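/- Let I and A be finite nonempty types, let P : I → ℝ be a probability mass function on I, let g : A → ℝ and, for each ν ∈ I, p_ν : A → ℝ be probability mass functions that are everywhere positive on A. Define ℓ(ν) = D_KL(p_ν‖g), c(ν) = max_{a∈A} |log p_ν(a) − log g(a)|, and D_{η,ν} = D_KL(p_η‖p_ν). Then the variance Σ_{ν} P(ν)·(ℓ(ν) − Σ_{η} P(η)·ℓ(η))² satisfies Σ_{ν} P(ν)·(ℓ(ν) − Σ_{η} P(η)·ℓ(η))² ≤ Σ_{ν} P(ν)·( Σ_{η} P(η)·( D_{η,ν} + c(ν)·√(2·D_{η,ν}) ) )². -/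

import Mathlib

/-!
Writing `ℓ ν - ℓ η = -D η ν - ∑ a, (p η a - p ν a) * (log (p ν a) - log (g a))`, the cross term
is at most `c ν * ‖p η - p ν‖₁ ≤ c ν * √(2 * D η ν)` by Pinsker's inequality, so
`|ℓ ν - ℓ η| ≤ D η ν + c ν * √(2 * D η ν)`; averaging over `η` and squaring gives the bound.
Pinsker's inequality follows from the pointwise bound `3 (t - 1)² / (2 (t + 2)) ≤ t log t - t + 1`
and Cauchy–Schwarz with weights `q + 2 p`.
-/

/-- Kullback–Leibler divergence (natural log) between two PMFs on a finite type. -/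
noncomputable def KLdiv {A : Type*} [Fintype A] (q p : A → ℝ) : ℝ :=
  ∑ a, q a * Real.log (q a / p a)

open Real Finset Set

theorem le_of_hasDerivAt_of_nonpos_of_nonneg {f f' : ℝ → ℝ} {a b x : ℝ}
    (hf : ∀ y, a < y → HasDerivAt f (f' y) y)
    (hleft : ∀ y, a < y → y ≤ b → f' y ≤ 0) (hright : ∀ y, b ≤ y → 0 ≤ f' y)
    (hab : a < b) (hx : a < x) : f b ≤ f x := by
  have hcont : ∀ u v, a < u → ContinuousOn f (Icc u v) := fun u v hu y hy =>
    (hf y (hu.trans_le hy.1)).continuousAt.continuousWithinAt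
  rcases le_total b x with hbx | hxb
  · refine monotoneOn_of_hasDerivWithinAt_nonneg (f' := f') (convex_Icc b x) (hcont b x hab)
      (fun y hy => ?_) (fun y hy => ?_) ⟨le_rfl, hbx⟩ ⟨hbx, le_rfl⟩ hbx
    all_goals rw [interior_Icc] at hy
    · exact (hf y (hab.trans hy.1)).hasDerivWithinAt
    · exact hright y hy.1.le
  · refine antitoneOn_of_hasDerivWithinAt_nonpos (f' := f') (convex_Icc x b) (hcont x b hx)
      (fun y hy => ?_) (fun y hy => ?_) ⟨le_rfl, hxb⟩ ⟨hxb, le_rfl⟩ hxb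
    all_goals rw [interior_Icc] at hy
    · exact (hf y (hx.trans hy.1)).hasDerivWithinAt
    · exact hleft y (hx.trans hy.1) hy.2.le

theorem hasDerivAt_log_sub_div {t : ℝ} (ht : 0 < t) :
    HasDerivAt (fun t => log t - 3 * ((t - 1) * (t + 5)) / (2 * (t + 2) ^ 2))
      (1 / t - 27 / (t + 2) ^ 3) t := by
  have hnum : HasDerivAt (fun t : ℝ => 3 * ((t - 1) * (t + 5))) (3 * (1 * (t + 5) + (t - 1) * 1)) t :=
    (((hasDerivAt_id t).sub_const 1).mul ((hasDerivAt_id t).add_const 5)).const_mul 3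
  have hden : HasDerivAt (fun t : ℝ => 2 * (t + 2) ^ 2) (2 * ((2 : ℕ) * (t + 2) ^ 1 * 1)) t :=
    (((hasDerivAt_id t).add_const 2).pow 2).const_mul 2
  refine ((hasDerivAt_log ht.ne').sub (hnum.div hden (by positivity))).congr_deriv ?_
  field_simp
  ring

theorem hasDerivAt_mul_log_sub_div {t : ℝ} (ht : 0 < t) :
    HasDerivAt (fun t => t * log t - t + 1 - 3 * (t - 1) ^ 2 / (2 * (t + 2)))
      (log t - 3 * ((t - 1) * (t + 5)) / (2 * (t + 2) ^ 2)) t := by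
  have hnum : HasDerivAt (fun t : ℝ => 3 * (t - 1) ^ 2) (3 * ((2 : ℕ) * (t - 1) ^ 1 * 1)) t :=
    (((hasDerivAt_id t).sub_const 1).pow 2).const_mul 3
  have hden : HasDerivAt (fun t : ℝ => 2 * (t + 2)) (2 * 1) t :=
    ((hasDerivAt_id t).add_const 2).const_mul 2
  refine (((((hasDerivAt_id t).mul (hasDerivAt_log ht.ne')).sub (hasDerivAt_id t)).add_const 1).sub
    (hnum.div hden (by positivity))).congr_deriv ?_
  rw [id, mul_inv_cancel₀ ht.ne']
  field_simp
  ring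

theorem monotoneOn_log_sub_div :
    MonotoneOn (fun t => log t - 3 * ((t - 1) * (t + 5)) / (2 * (t + 2) ^ 2)) (Ioi 0) := by
  refine monotoneOn_of_hasDerivWithinAt_nonneg (convex_Ioi 0) (f' := fun t => 1 / t - 27 / (t + 2) ^ 3)
    (fun t ht => (hasDerivAt_log_sub_div ht).continuousAt.continuousWithinAt)
    (fun t ht => ?_) (fun t ht => ?_)
  all_goals rw [interior_Ioi] at ht
  · exact (hasDerivAt_log_sub_div ht).hasDerivWithinAt
  · have ht : (0 : ℝ) < t := ht
    -- `(t + 2) ^ 3 - 27 * t = (t - 1) ^ 2 * (t + 8)`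
    have hcube : 27 * t ≤ (t + 2) ^ 3 := by nlinarith [mul_nonneg (sq_nonneg (t - 1)) ht.le]
    rw [sub_nonneg, div_le_div_iff₀ (by positivity) ht]
    linarith

theorem three_mul_sq_div_le_mul_log {t : ℝ} (ht : 0 < t) :
    3 * (t - 1) ^ 2 / (2 * (t + 2)) ≤ t * log t - t + 1 := by
  have hmono := monotoneOn_log_sub_div
  have key := le_of_hasDerivAt_of_nonpos_of_nonneg (fun y hy => hasDerivAt_mul_log_sub_div hy)
    (fun y hy hy1 => by simpa using hmono hy (mem_Ioi.2 one_pos) hy1)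
    (fun y hy1 => by simpa using hmono (mem_Ioi.2 one_pos) (mem_Ioi.2 (one_pos.trans_le hy1)) hy1) one_pos ht
  norm_num at key
  linarith

theorem sq_div_le_mul_log_div_sub_add {p q : ℝ} (hp : 0 < p) (hq : 0 < q) :
    3 * (q - p) ^ 2 / (2 * (q + 2 * p)) ≤ q * log (q / p) - q + p := by
  have h := mul_le_mul_of_nonneg_left (three_mul_sq_div_le_mul_log (div_pos hq hp)) hp.le
  calc 3 * (q - p) ^ 2 / (2 * (q + 2 * p))
      = p * (3 * (q / p - 1) ^ 2 / (2 * (q / p + 2))) := by field_simp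
    _ ≤ p * (q / p * log (q / p) - q / p + 1) := h
    _ = q * log (q / p) - q + p := by field_simp

section Pinsker

variable {A : Type*} [Fintype A] {q p : A → ℝ}

theorem sq_sum_abs_sub_le_two_mul_KLdiv (hq : ∀ a, 0 < q a) (hp : ∀ a, 0 < p a)
    (hqsum : ∑ a, q a = 1) (hpsum : ∑ a, p a = 1) :
    (∑ a, |q a - p a|) ^ 2 ≤ 2 * KLdiv q p := by
  have hw : ∀ a, 0 < q a + 2 * p a := fun a => by linarith [hq a, hp a]
  have hKL : 3 / 2 * ∑ a, (q a - p a) ^ 2 / (q a + 2 * p a) ≤ KLdiv q p :=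
    calc 3 / 2 * ∑ a, (q a - p a) ^ 2 / (q a + 2 * p a)
        = ∑ a, 3 * (q a - p a) ^ 2 / (2 * (q a + 2 * p a)) := by
          rw [mul_sum]
          refine sum_congr rfl fun a _ => ?_
          field_simp
      _ ≤ ∑ a, (q a * log (q a / p a) - q a + p a) :=
          sum_le_sum fun a _ => sq_div_le_mul_log_div_sub_add (hp a) (hq a)
      _ = KLdiv q p := by
          rw [sum_add_distrib, sum_sub_distrib, hqsum, hpsum, KLdiv]
          ring
  have hCS : (∑ a, |q a - p a|) ^ 2
      ≤ (∑ a, (q a - p a) ^ 2 / (q a + 2 * p a)) * ∑ a, (q a + 2 * p a) :=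
    sum_sq_le_sum_mul_sum_of_sq_le_mul _ (fun a _ => by have := hw a; positivity)
      (fun a _ => (hw a).le) fun a _ => by rw [sq_abs, div_mul_cancel₀ _ (hw a).ne']
  have hmass : ∑ a, (q a + 2 * p a) = 3 := by
    rw [sum_add_distrib, ← mul_sum, hqsum, hpsum]
    norm_num
  rw [hmass] at hCS
  linarith

theorem KLdiv_nonneg (hq : ∀ a, 0 < q a) (hp : ∀ a, 0 < p a)
    (hqsum : ∑ a, q a = 1) (hpsum : ∑ a, p a = 1) : 0 ≤ KLdiv q p := by
  nlinarith [sq_sum_abs_sub_le_two_mul_KLdiv hq hp hqsum hpsum, sq_nonneg (∑ a, |q a - p a|)]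

theorem KLdiv_sub_KLdiv {g : A → ℝ} (hq : ∀ a, 0 < q a) (hp : ∀ a, 0 < p a)
    (hg : ∀ a, 0 < g a) :
    KLdiv q g - KLdiv p g = KLdiv q p + ∑ a, (q a - p a) * (log (p a) - log (g a)) := by
  simp only [KLdiv, ← sum_sub_distrib, ← sum_add_distrib]
  refine sum_congr rfl fun a _ => ?_
  rw [log_div (hq a).ne' (hg a).ne', log_div (hq a).ne' (hp a).ne',
    log_div (hp a).ne' (hg a).ne']
  ring

theorem abs_KLdiv_sub_KLdiv_le [Nonempty A] {g : A → ℝ} {c : ℝ} (hq : ∀ a, 0 < q a)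
    (hp : ∀ a, 0 < p a) (hg : ∀ a, 0 < g a) (hqsum : ∑ a, q a = 1) (hpsum : ∑ a, p a = 1)
    (hc : ∀ a, |log (p a) - log (g a)| ≤ c) :
    |KLdiv p g - KLdiv q g| ≤ KLdiv q p + c * √(2 * KLdiv q p) := by
  have hc0 : 0 ≤ c := (abs_nonneg _).trans (hc (Classical.arbitrary A))
  have hcross : |∑ a, (q a - p a) * (log (p a) - log (g a))| ≤ c * √(2 * KLdiv q p) :=
    calc |∑ a, (q a - p a) * (log (p a) - log (g a))|
        ≤ ∑ a, |q a - p a| * c := (abs_sum_le_sum_abs _ _).trans <| sum_le_sum fun a _ => by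
          rw [abs_mul]
          exact mul_le_mul_of_nonneg_left (hc a) (abs_nonneg _)
      _ = c * ∑ a, |q a - p a| := by rw [← sum_mul, mul_comm]
      _ ≤ c * √(2 * KLdiv q p) := mul_le_mul_of_nonneg_left
          (le_sqrt_of_sq_le (sq_sum_abs_sub_le_two_mul_KLdiv hq hp hqsum hpsum)) hc0
  rw [abs_sub_comm, KLdiv_sub_KLdiv hq hp hg]
  exact (abs_add_le _ _).trans (add_le_add (abs_of_nonneg
    (KLdiv_nonneg hq hp hqsum hpsum)).le hcross)

end Pinsker

theorem abs_sub_sum_mul_le {I : Type*} [Fintype I] {P ℓ : I → ℝ} (hP : ∀ i, 0 ≤ P i)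
    (hPsum : ∑ i, P i = 1) (x : ℝ) : |x - ∑ i, P i * ℓ i| ≤ ∑ i, P i * |x - ℓ i| := by
  have hmean : x - ∑ i, P i * ℓ i = ∑ i, P i * (x - ℓ i) := by
    simp only [mul_sub, sum_sub_distrib, ← sum_mul, hPsum, one_mul]
  rw [hmean]
  refine (abs_sum_le_sum_abs _ _).trans_eq (sum_congr rfl fun i _ => ?_)
  rw [abs_mul, abs_of_nonneg (hP i)]

theorem stmt_6_general {I A : Type*} [Fintype I] [Fintype A] [Nonempty A]
    (P : I → ℝ) (hP : ∀ ν, 0 ≤ P ν) (hPsum : ∑ ν, P ν = 1)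
    (g : A → ℝ) (hg : ∀ a, 0 < g a)
    (p : I → A → ℝ) (hp : ∀ ν a, 0 < p ν a) (hpsum : ∀ ν, ∑ a, p ν a = 1)
    (ℓ c : I → ℝ) (D : I → I → ℝ)
    (hℓ : ∀ ν, ℓ ν = KLdiv (p ν) g)
    (hc : ∀ ν, c ν = Finset.univ.sup' Finset.univ_nonempty
                       fun a => |Real.log (p ν a) - Real.log (g a)|)
    (hD : ∀ η ν, D η ν = KLdiv (p η) (p ν)) :
    ∑ ν, P ν * (ℓ ν - ∑ η, P η * ℓ η) ^ 2
      ≤ ∑ ν, P ν * (∑ η, P η * (D η ν + c ν * Real.sqrt (2 * D η ν))) ^ 2 := by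
  have hpair : ∀ η ν, |ℓ ν - ℓ η| ≤ D η ν + c ν * √(2 * D η ν) := fun η ν => by
    rw [hℓ, hℓ, hD]
    exact abs_KLdiv_sub_KLdiv_le (hp η) (hp ν) hg (hpsum η) (hpsum ν)
      fun a => hc ν ▸ le_sup' (fun a => |log (p ν a) - log (g a)|) (mem_univ a)
  refine sum_le_sum fun ν _ => mul_le_mul_of_nonneg_left ?_ (hP ν)
  rw [← sq_abs]
  exact pow_le_pow_left₀ (abs_nonneg _) ((abs_sub_sum_mul_le hP hPsum _).trans
    (sum_le_sum fun η _ => mul_le_mul_of_nonneg_left (hpair η ν) (hP η))) 2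

/-- Proposition 2 of the paper, single-sample form: with
`ℓ(ν) = D_KL(p_ν‖g)`, `c(ν) = max_a |log (p_ν a) − log (g a)|` and
`D_{η,ν} = D_KL(p_η‖p_ν)`, the variance of `ℓ` under `P` is bounded by
`∑_ν P ν · (∑_η P η · (D_{η,ν} + c ν · √(2·D_{η,ν})))²`. -/
theorem stmt_6 {I A : Type*} [Fintype I] [Nonempty I] [Fintype A] [Nonempty A]
    (P : I → ℝ) (hP : ∀ ν, 0 ≤ P ν) (hPsum : ∑ ν, P ν = 1)
    (g : A → ℝ) (hg : ∀ a, 0 < g a) (hgsum : ∑ a, g a = 1)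
    (p : I → A → ℝ) (hp : ∀ ν a, 0 < p ν a) (hpsum : ∀ ν, ∑ a, p ν a = 1)
    (ℓ c : I → ℝ) (D : I → I → ℝ)
    (hℓ : ∀ ν, ℓ ν = KLdiv (p ν) g)
    (hc : ∀ ν, c ν = Finset.univ.sup' Finset.univ_nonempty
                       fun a => |Real.log (p ν a) - Real.log (g a)|)
    (hD : ∀ η ν, D η ν = KLdiv (p η) (p ν)) :
    ∑ ν, P ν * (ℓ ν - ∑ η, P η * ℓ η) ^ 2
      ≤ ∑ ν, P ν * (∑ η, P η * (D η ν + c ν * Real.sqrt (2 * D η ν))) ^ 2 :=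
  stmt_6_general P hP hPsum g hg p hp hpsum ℓ c D hℓ hc hD
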